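/- With β(u,v) = ((v-3u)(324u²+15u²v-378uv-4uv²+243v+72v²)/((v-27)(4u³+27v-18uv-u²v+4v²)), -4(v-3u)³/(4u³+27v-18uv-u²v+4v²)), the map β is an involution of the rational function field: β(β(u,v)) = (u,v) as an identity of rational functions in u and v. -/

import Mathlib

/-!
Write `s = 9u - 2v - 27` and `D = 4u³ + 27v - 18uv - u²v + 4v²`. Every polynomial that `β` is
built from factors completely after substituting `β(u,v)`, into powers of `u`, `v`, `v - 3u`,
`v - 27`, `s` and `D`:
`β₂ - 27 = -v s² / D`, `β₂ - 3β₁ = -(v - 3u) v s² / ((v - 27) D)`,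
`D(β) = 4 (v - 3u)³ v² s⁶ / ((v - 27) D)³`, and the cubic factor of the numerator of `β₁`
becomes `4 u (v - 27) (v - 3u)² v² s⁶ / ((v - 27) D)³`.
In `β(β(u,v))` all these factors then cancel except `u` and `v`. So `β ∘ β = id` holds in any
field with `2 ≠ 0` wherever the factors are nonzero, and at the generic point of `ℚ(u,v)` they
are nonzero because they do not vanish at `(1, 1)`.
-/

/-- The field `ℚ(u,v)` of rational functions in two variables. -/
abbrev RatFuncTwo : Type := FractionRing (MvPolynomial (Fin 2) ℚ)

/-- The map `β(u,v)`. -/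
noncomputable def betaMap (p : RatFuncTwo × RatFuncTwo) : RatFuncTwo × RatFuncTwo :=
  ((p.2 - 3 * p.1) *
      (324 * p.1 ^ 2 + 15 * p.1 ^ 2 * p.2 - 378 * p.1 * p.2 - 4 * p.1 * p.2 ^ 2 +
        243 * p.2 + 72 * p.2 ^ 2) /
      ((p.2 - 27) *
        (4 * p.1 ^ 3 + 27 * p.2 - 18 * p.1 * p.2 - p.1 ^ 2 * p.2 + 4 * p.2 ^ 2)),
    -4 * (p.2 - 3 * p.1) ^ 3 /
      (4 * p.1 ^ 3 + 27 * p.2 - 18 * p.1 * p.2 - p.1 ^ 2 * p.2 + 4 * p.2 ^ 2))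

section Beta

variable {K : Type*}

def betaNum [CommRing K] (u v : K) : K :=
  324 * u ^ 2 + 15 * u ^ 2 * v - 378 * u * v - 4 * u * v ^ 2 + 243 * v + 72 * v ^ 2

def betaDenom [CommRing K] (u v : K) : K :=
  4 * u ^ 3 + 27 * v - 18 * u * v - u ^ 2 * v + 4 * v ^ 2

theorem map_betaDenom {L : Type*} [CommRing K] [CommRing L] (f : K →+* L) (u v : K) :
    f (betaDenom u v) = betaDenom (f u) (f v) := by
  simp only [betaDenom, map_add, map_sub, map_mul, map_pow, map_ofNat]

def beta [Field K] (p : K × K) : K × K :=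
  ((p.2 - 3 * p.1) * betaNum p.1 p.2 / ((p.2 - 27) * betaDenom p.1 p.2),
    -4 * (p.2 - 3 * p.1) ^ 3 / betaDenom p.1 p.2)

variable [Field K] {u v : K}

theorem beta_snd_sub_27 (hD : betaDenom u v ≠ 0) :
    (beta (u, v)).2 - 27 = -(v * (9 * u - 2 * v - 27) ^ 2) / betaDenom u v := by
  rw [eq_div_iff hD, sub_mul, beta, div_mul_cancel₀ _ hD, betaDenom]
  ring

theorem beta_snd_sub_three_mul_fst (hD : betaDenom u v ≠ 0) (hw : v - 27 ≠ 0) :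
    (beta (u, v)).2 - 3 * (beta (u, v)).1 =
      -((v - 3 * u) * v * (9 * u - 2 * v - 27) ^ 2) / ((v - 27) * betaDenom u v) := by
  simp only [beta]
  field_simp
  simp only [betaNum]
  ring

theorem betaNum_beta (hD : betaDenom u v ≠ 0) (hw : v - 27 ≠ 0) :
    betaNum (beta (u, v)).1 (beta (u, v)).2 =
      4 * u * (v - 27) * (v - 3 * u) ^ 2 * v ^ 2 * (9 * u - 2 * v - 27) ^ 6 /
        ((v - 27) * betaDenom u v) ^ 3 := by
  rw [beta, betaNum]
  field_simp
  simp only [betaNum, betaDenom]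
  ring

theorem betaDenom_beta (hD : betaDenom u v ≠ 0) (hw : v - 27 ≠ 0) :
    betaDenom (beta (u, v)).1 (beta (u, v)).2 =
      4 * (v - 3 * u) ^ 3 * v ^ 2 * (9 * u - 2 * v - 27) ^ 6 /
        ((v - 27) * betaDenom u v) ^ 3 := by
  rw [beta, betaDenom]
  field_simp
  simp only [betaNum, betaDenom]
  ring

theorem beta_beta (h2 : (2 : K) ≠ 0) (hD : betaDenom u v ≠ 0) (hw : v - 27 ≠ 0) (hv : v ≠ 0)
    (h3 : v - 3 * u ≠ 0) (hs : 9 * u - 2 * v - 27 ≠ 0) : beta (beta (u, v)) = (u, v) := by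
  rw [beta, beta_snd_sub_three_mul_fst hD hw, beta_snd_sub_27 hD, betaNum_beta hD hw,
    betaDenom_beta hD hw, Prod.mk.injEq]
  generalize betaDenom u v = D at hD ⊢
  generalize v - 27 = w at hw ⊢
  generalize v - 3 * u = m at h3 ⊢
  generalize 9 * u - 2 * v - 27 = s at hs ⊢
  have h4 : (4 : K) ≠ 0 := by
    rw [show (4 : K) = 2 * 2 by norm_num]
    exact mul_ne_zero h2 h2
  constructor <;> field_simp

end Beta

theorem betaMap_eq_beta : betaMap = beta := rfl

open MvPolynomial in
theorem beta_involution :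
    betaMap (betaMap
        (algebraMap (MvPolynomial (Fin 2) ℚ) RatFuncTwo (MvPolynomial.X 0),
         algebraMap (MvPolynomial (Fin 2) ℚ) RatFuncTwo (MvPolynomial.X 1))) =
      (algebraMap (MvPolynomial (Fin 2) ℚ) RatFuncTwo (MvPolynomial.X 0),
       algebraMap (MvPolynomial (Fin 2) ℚ) RatFuncTwo (MvPolynomial.X 1)) := by
  have map_ne_zero_of_eval (q : MvPolynomial (Fin 2) ℚ) (hq : eval 1 q ≠ 0) :
      algebraMap (MvPolynomial (Fin 2) ℚ) RatFuncTwo q ≠ 0 := fun h =>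
    hq (by rw [IsFractionRing.to_map_eq_zero_iff.mp h, map_zero])
  rw [betaMap_eq_beta]
  refine beta_beta two_ne_zero ?_ ?_ ?_ ?_ ?_
  · have h := map_ne_zero_of_eval (betaDenom (X 0) (X 1)) (by norm_num [betaDenom])
    rwa [map_betaDenom] at h
  · have h := map_ne_zero_of_eval (X 1 - 27) (by norm_num)
    rwa [map_sub, map_ofNat] at h
  · exact map_ne_zero_of_eval (X 1) (by norm_num)
  · have h := map_ne_zero_of_eval (X 1 - 3 * X 0) (by norm_num)
    rwa [map_sub, map_mul, map_ofNat] at h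
  · have h := map_ne_zero_of_eval (9 * X 0 - 2 * X 1 - 27) (by norm_num)
    rwa [map_sub, map_sub, map_mul, map_mul, map_ofNat, map_ofNat, map_ofNat] at h
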